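/- For every r > 2M, the tangential component of the spacetime second fundamental form of the sphere of symmetry on the exterior CMC slice, namely K̂₁₁(r) = ((r − 2M)·h'(r)/r²)·(f(r)⁻¹ − h'(r)²·f(r))^(−1/2), equals Ĥ + c₁/r³. In particular, when c₁ = 0 one has K̂₁₁(r) = Ĥ for all r > 2M (the slice is spacetime umbilical). -/

import Mathlib

open Real Filter Topology Set

/-- Schwarzschild lapse-type function `f(r) = 1 - 2M/r`. -/
noncomputable def f (M r : ℝ) : ℝ := 1 - 2 * M / r

/-- `P(r) = Ĥ·r + c₁/r²`. -/
noncomputable def P (H c1 r : ℝ) : ℝ := H * r + c1 / r ^ 2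

/-- Slope of the height function of the exterior CMC slice:
`h'(r) = P(r)/(f(r)·√(f(r) + P(r)²))`. -/
noncomputable def h' (M H c1 r : ℝ) : ℝ :=
  P H c1 r / (f M r * Real.sqrt (f M r + (P H c1 r) ^ 2))

/-- Tangential component of the spacetime second fundamental form of the sphere of
symmetry on the exterior CMC slice:
`K̂₁₁(r) = ((r − 2M)h'(r)/r²)·(f(r)⁻¹ − h'(r)²f(r))^(−1/2)`. -/
noncomputable def Khat11 (M H c1 r : ℝ) : ℝ :=
  ((r - 2 * M) * h' M H c1 r / r ^ 2) *
    ((f M r)⁻¹ - (h' M H c1 r) ^ 2 * f M r) ^ (-(1 : ℝ) / 2)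

/-
Write `s = √(f + P²)`, so that `h' = P / (f s)`. The Lorentz-type factor then collapses,
`f⁻¹ - h'² f = (s² - P²) / (f s²) = 1 / s²`, and its power `-1/2` is `s`, which cancels the `s`
in `h'`. What remains is `(r - 2M) P / (r² f) = P / r = Ĥ + c₁/r³`, since `r f = r - 2M`.
-/

lemma inv_rpow_neg_one_half {x : ℝ} (hx : 0 ≤ x) : x⁻¹ ^ (-(1 : ℝ) / 2) = √x := by
  rw [Real.inv_rpow hx, neg_div, Real.rpow_neg hx, inv_inv, Real.sqrt_eq_rpow]

lemma inv_sub_sq_div_mul_sqrt_add_sq_mul_self {a : ℝ} (ha : 0 < a) (p : ℝ) :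
    a⁻¹ - (p / (a * √(a + p ^ 2))) ^ 2 * a = (a + p ^ 2)⁻¹ := by
  have hq : 0 < a + p ^ 2 := by positivity
  rw [div_pow, mul_pow, Real.sq_sqrt hq.le]
  field_simp
  ring

lemma mul_f_self (M r : ℝ) (hr : r ≠ 0) : r * f M r = r - 2 * M := by
  rw [f]
  field_simp

lemma f_pos {M r : ℝ} (hr : 0 < r) (hMr : 2 * M < r) : 0 < f M r := by
  have h := mul_f_self M r hr.ne'
  nlinarith

lemma P_div_self (H c1 : ℝ) {r : ℝ} (hr : r ≠ 0) : P H c1 r / r = H + c1 / r ^ 3 := by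
  rw [P]
  field_simp

lemma Khat11_eq_P_div {M r : ℝ} (H c1 : ℝ) (hr : 0 < r) (hMr : 2 * M < r) :
    Khat11 M H c1 r = P H c1 r / r := by
  have hf := f_pos hr hMr
  have hs : 0 < √(f M r + P H c1 r ^ 2) := Real.sqrt_pos.2 (by positivity)
  rw [Khat11, h', inv_sub_sq_div_mul_sqrt_add_sq_mul_self hf,
    inv_rpow_neg_one_half (by positivity), ← mul_f_self M r hr.ne']
  field_simp

/-- For every `r > 2M`, `K̂₁₁(r) = Ĥ + c₁/r³`; in particular, when `c₁ = 0` one has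
`K̂₁₁(r) = Ĥ` for all `r > 2M` (the slice is spacetime umbilical). -/
theorem exterior_cmc_Khat11 (M H c1 : ℝ) (hM : 0 < M) :
    (∀ r : ℝ, 2 * M < r → Khat11 M H c1 r = H + c1 / r ^ 3) ∧
    (c1 = 0 → ∀ r : ℝ, 2 * M < r → Khat11 M H c1 r = H) := by
  have hKhat : ∀ r : ℝ, 2 * M < r → Khat11 M H c1 r = H + c1 / r ^ 3 := fun r hMr => by
    have hr : 0 < r := by linarith
    rw [Khat11_eq_P_div H c1 hr hMr, P_div_self H c1 hr.ne']
  refine ⟨hKhat, fun hc1 r hMr => ?_⟩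
  rw [hKhat r hMr, hc1, zero_div, add_zero]
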